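/- arXiv:2009.02721 — 3 statements merged into one kernel-verified Lean document; each statement's English description precedes it below -/
import Mathlib

section
/- If $j_1, j_2, j_3$ are nonzero integers, then $|j_1^3 + j_2^3 + j_3^3| \geq 1$, i.e. the sum of three nonzero integer cubes never vanishes. -/
/-- The sum of three nonzero integer cubes never vanishes (Euler: Fermat's
Last Theorem for exponent 3). -/
theorem sum_of_three_nonzero_cubes_ne_zero (j₁ j₂ j₃ : ℤ)
    (h₁ : j₁ ≠ 0) (h₂ : j₂ ≠ 0) (h₃ : j₃ ≠ 0) :
    1 ≤ |j₁ ^ 3 + j₂ ^ 3 + j₃ ^ 3| := by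
  have hne : j₁ ^ 3 + j₂ ^ 3 + j₃ ^ 3 ≠ 0 := by
    intro h
    have := (fermatLastTheoremFor_iff_int.mp fermatLastTheoremThree) j₁ j₂ (-j₃) h₁ h₂
      (neg_ne_zero.mpr h₃)
    apply this
    ring_nf
    linarith
  exact Int.one_le_abs hne
end

section
/- Let $N \geq 1$ and let $X_j^j = \sum_{k=0}^{N+1} \lambda_{1-k} (2\pi i j)^{1-k} + r_j$ for all $j$ in an infinite subset $S^\bot \subseteq \mathbb{Z} \setminus \{0\}$ (closed under negation), where $\lambda_{1-k} \in \mathbb{R}$ and $|r_j| \leq C |j|^{-N-1}$. If $X_j^j$ is purely imaginary for every $j \in S^\bot$, then $\lambda_{1-k} = 0$ for every $k$ with $1 - k$ even, and each $r_j$ is purely imaginary. -/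
/-!
Taking real parts, with `a k = λ_k · Re((2πi)^(1-k))`, gives
`∑ a k j^(1-k) = -Re r_j = O(|j|^(-N-1))`. Multiplying by `j^(N+1)` turns the left side into
`j · Q(j)` for a polynomial `Q` with coefficients `a k`; since `j · Q(j)` stays bounded on the
infinite set `S⊥` while a polynomial of positive degree is unbounded, `Q = 0`. For `1-k` even,
`(2πi)^(1-k)` is a nonzero real number, so `λ_k = 0`; and then `Re r_j = 0`.
-/

open Filter Polynomial Finset ComplexConjugate

section

variable {𝕜 α : Type*} [NormedField 𝕜] {l : Filter α} [l.NeBot] {z : α → 𝕜}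

namespace Polynomial

theorem eq_zero_of_norm_eval_mul_le (hz : Tendsto (‖z ·‖) l atTop) {p : 𝕜[X]} {C : ℝ}
    (h : ∀ᶠ x in l, ‖p.eval (z x) * z x‖ ≤ C) : p = 0 := by
  by_contra hp
  have hdeg : 0 < degree (p * X) :=
    (zero_le_degree_iff.mpr hp).trans_lt (degree_lt_degree_mul_X hp)
  obtain ⟨x, hgt, hle⟩ :=
    (((p * X).tendsto_norm_atTop hdeg hz).eventually_gt_atTop C).and h |>.exists
  rw [eval_mul, eval_X] at hgt
  exact hle.not_gt hgt

theorem coeff_sum_C_mul_X_pow_sub {n k : ℕ} (a : ℕ → 𝕜) (hk : k < n) :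
    (∑ i ∈ range n, C (a i) * X ^ (n - 1 - i)).coeff (n - 1 - k) = a k := by
  rw [finsetSum_coeff, sum_eq_single k]
  · simp
  · intro i hi hik
    rw [coeff_C_mul_X_pow, if_neg (by simp at hi; omega)]
  · simp [hk]

theorem eval_sum_C_mul_X_pow_sub_mul {n : ℕ} (a : ℕ → 𝕜) {x : 𝕜} (hx : x ≠ 0) :
    (∑ i ∈ range n, C (a i) * X ^ (n - 1 - i)).eval x * x =
      (∑ k ∈ range n, a k * x ^ (1 - k : ℤ)) * x ^ ((n : ℤ) - 1) := by
  rw [eval_finsetSum, sum_mul, sum_mul]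
  refine sum_congr rfl fun k hk => ?_
  have hk : k < n := mem_range.mp hk
  rw [eval_mul, eval_C, eval_pow, eval_X, mul_assoc, mul_assoc, ← zpow_natCast,
    ← zpow_add_one₀ hx, ← zpow_add₀ hx]
  congr 2
  omega

end Polynomial

theorem eq_zero_of_norm_sum_mul_zpow_le (hz : Tendsto (‖z ·‖) l atTop) {n : ℕ} {a : ℕ → 𝕜}
    {B : ℝ}
    (h : ∀ᶠ x in l, ‖∑ k ∈ range n, a k * z x ^ (1 - k : ℤ)‖ ≤ B * ‖z x‖ ^ (1 - n : ℤ)) :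
    ∀ k < n, a k = 0 := by
  have hQ : ∑ i ∈ range n, C (a i) * X ^ (n - 1 - i) = 0 := by
    refine eq_zero_of_norm_eval_mul_le hz (C := B) ?_
    filter_upwards [h, hz.eventually_gt_atTop 0] with x hx hpos
    rw [eval_sum_C_mul_X_pow_sub_mul a (norm_pos_iff.mp hpos), norm_mul, norm_zpow]
    calc _ ≤ B * ‖z x‖ ^ (1 - n : ℤ) * ‖z x‖ ^ ((n : ℤ) - 1) := by gcongr
      _ = B := by rw [mul_assoc, ← zpow_add₀ hpos.ne']; simp
  intro k hk
  rw [← coeff_sum_C_mul_X_pow_sub a hk, hQ, coeff_zero]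

end

namespace Complex

theorem im_zpow_eq_zero_of_conj_eq_neg {w : ℂ} (hw : conj w = -w) {m : ℤ} (hm : Even m) :
    (w ^ m).im = 0 :=
  conj_eq_iff_im.mp (by rw [map_zpow₀, hw, hm.neg_zpow])

theorem re_ofReal_mul_mul_ofReal_zpow (c x : ℝ) (w : ℂ) (m : ℤ) :
    ((c : ℂ) * (w * x) ^ m).re = c * (w ^ m).re * x ^ m := by
  rw [mul_zpow, ← ofReal_zpow, re_ofReal_mul, re_mul_ofReal, mul_assoc]

end Complex

theorem diagonal_purely_imaginary_general
    (N : ℕ)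
    (Sbot : Set ℤ) (hinf : Sbot.Infinite)
    (lam : ℕ → ℝ) (r X : ℤ → ℂ) (C : ℝ)
    (hX : ∀ j ∈ Sbot, X j =
      (∑ k ∈ Finset.range (N + 2),
        (lam k : ℂ) * (2 * (Real.pi : ℂ) * Complex.I * (j : ℂ)) ^ ((1 : ℤ) - k)) + r j)
    (hr : ∀ j ∈ Sbot, ‖r j‖ ≤ C * |(j : ℝ)| ^ (-(N : ℤ) - 1))
    (him : ∀ j ∈ Sbot, (X j).re = 0) :
    (∀ k < N + 2, Even ((1 : ℤ) - k) → lam k = 0) ∧ (∀ j ∈ Sbot, (r j).re = 0) := by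
  set w : ℂ := 2 * Real.pi * Complex.I
  set a : ℕ → ℝ := fun k => lam k * (w ^ ((1 : ℤ) - k)).re
  have hre : ∀ j ∈ Sbot,
      ∑ k ∈ range (N + 2), a k * (j : ℝ) ^ ((1 : ℤ) - k) = -(r j).re := by
    intro j hj
    have h := him j hj
    simp only [hX j hj, Complex.add_re, Complex.re_sum, ← Complex.ofReal_intCast,
      Complex.re_ofReal_mul_mul_ofReal_zpow] at h
    linarith
  have ha : ∀ k < N + 2, a k = 0 := by
    have : (cofinite ⊓ 𝓟 Sbot).NeBot := hinf.cofinite_inf_principal_neBot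
    have hcast : Tendsto (fun j : ℤ => ‖(j : ℝ)‖) (cofinite ⊓ 𝓟 Sbot) atTop :=
      (tendsto_norm_cocompact_atTop.comp Int.tendsto_coe_cofinite).mono_left inf_le_left
    refine eq_zero_of_norm_sum_mul_zpow_le hcast (B := C) ?_
    filter_upwards [mem_inf_of_right (mem_principal_self Sbot)] with j hj
    calc _ = |(r j).re| := by rw [hre j hj, norm_neg, Real.norm_eq_abs]
      _ ≤ ‖r j‖ := Complex.abs_re_le_norm (r j)
      _ ≤ _ := by rw [Real.norm_eq_abs]; convert hr j hj using 3; push_cast; ring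
  refine ⟨fun k hk hm => ?_, fun j hj => ?_⟩
  · have hw : conj w = -w := by simp [w, map_ofNat]
    have hre_ne : (w ^ ((1 : ℤ) - k)).re ≠ 0 := fun h0 =>
      zpow_ne_zero _ (by simp [w, Real.pi_ne_zero])
        (Complex.ext h0 (Complex.im_zpow_eq_zero_of_conj_eq_neg hw hm))
    exact (mul_eq_zero.mp (ha k hk)).resolve_right hre_ne
  · have h := hre j hj
    rw [sum_eq_zero fun k hk => by rw [ha k (mem_range.mp hk), zero_mul]] at h
    linarith

/-- If the diagonal elements `X_j^j = ∑_{k=0}^{N+1} λ_{1-k} (2πij)^{1-k} + r_j`,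
`j ∈ S⊥` (an infinite subset of `ℤ \ {0}` closed under negation), with real
coefficients `λ_{1-k}` and `|r_j| ≤ C|j|^{-N-1}`, are purely imaginary, then
`λ_{1-k} = 0` for every `k` with `1-k` even, and each `r_j` is purely imaginary. -/
theorem diagonal_purely_imaginary
    (N : ℕ) (hN : 1 ≤ N)
    (Sbot : Set ℤ) (hinf : Sbot.Infinite) (hneg : ∀ j ∈ Sbot, -j ∈ Sbot)
    (h0 : ∀ j ∈ Sbot, j ≠ 0)
    (lam : ℕ → ℝ) (r X : ℤ → ℂ) (C : ℝ)
    (hX : ∀ j ∈ Sbot, X j =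
      (∑ k ∈ Finset.range (N + 2),
        (lam k : ℂ) * (2 * (Real.pi : ℂ) * Complex.I * (j : ℂ)) ^ ((1 : ℤ) - k)) + r j)
    (hr : ∀ j ∈ Sbot, ‖r j‖ ≤ C * |(j : ℝ)| ^ (-(N : ℤ) - 1))
    (him : ∀ j ∈ Sbot, (X j).re = 0) :
    (∀ k < N + 2, Even ((1 : ℤ) - k) → lam k = 0) ∧ (∀ j ∈ Sbot, (r j).re = 0) :=
  diagonal_purely_imaginary_general N Sbot hinf lam r X C hX hr him
end

section
/- Let $a \in H^{s_1 + 1}(\mathbb{T}_1)$ and $u \in H^{s_2}(\mathbb{T}_1)$ with $s_1, s_2 \geq 0$, and let $R(a, u)(x) = \sum_{\eta, \xi \in \mathbb{Z}} \omega(\eta, \xi) \hat{a}(\eta) \hat{u}(\xi) e^{2\pi i (\eta + \xi) x}$ where $\omega : \mathbb{Z}^2 \to \mathbb{R}$ is bounded by $1$ and supported in $\{(\eta, \xi) : \varepsilon' \langle \xi \rangle < |\eta| < \langle \xi \rangle / \varepsilon'\} \cup \{(0,0)\}$ for some $\varepsilon' \in (0,1)$. Then $R(a, u) \in H^{s_1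 + s_2}(\mathbb{T}_1)$ and $\|R(a, u)\|_{s_1 + s_2} \leq C(s_1, s_2, \varepsilon') \|a\|_{s_1 + 1} \|u\|_{s_2}$. -/
/-!
On the support of `ω` the output frequency `n = η + ξ` satisfies both `⟨n⟩ ≤ (1 + ε'⁻¹) ⟨η⟩` and
`⟨n⟩ ≤ (1 + ε'⁻¹) ⟨ξ⟩`, so `⟨n⟩^(s₁+s₂) |R̂(n)|` is dominated by `(1 + ε'⁻¹)^(s₁+s₂)` times the
convolution of `⟨·⟩^s₁ |â|` with `⟨·⟩^s₂ |û|`. Young's inequality `‖f ⋆ g‖₂ ≤ ‖f‖₁ ‖g‖₂` and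
Cauchy–Schwarz `‖⟨·⟩^s₁ â‖₁ ≤ ‖⟨·⟩⁻¹‖₂ ‖a‖_{s₁+1}` then give the bound. The estimates are carried
out in `ℝ≥0∞`, where neither the inner nor the outer series needs to be known to converge.
-/

open scoped ENNReal

namespace ENNReal

theorem two_mul_mul_le_add_sq (x y : ℝ≥0∞) : 2 * x * y ≤ x ^ 2 + y ^ 2 := by
  induction x with
  | top => simp
  | coe x =>
    induction y with
    | top => simp
    | coe y => exact_mod_cast two_mul_le_add_sq x y

theorem sq_tsum_mul_le {ι : Type*} (p g : ι → ℝ≥0∞) :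
    (∑' i, p i * g i) ^ 2 ≤ (∑' i, p i) * ∑' i, p i * g i ^ 2 := by
  have hpair : ∀ i j, 2 * (p i * g i * (p j * g j)) ≤
      p i * (p j * g j ^ 2) + p i * g i ^ 2 * p j := fun i j =>
    calc 2 * (p i * g i * (p j * g j)) = p i * p j * (2 * g i * g j) := by ring
      _ ≤ p i * p j * (g i ^ 2 + g j ^ 2) := by gcongr; exact two_mul_mul_le_add_sq _ _
      _ = _ := by ring
  have hdouble : 2 * (∑' i, p i * g i) ^ 2 ≤ 2 * ((∑' i, p i) * ∑' i, p i * g i ^ 2) :=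
    calc 2 * (∑' i, p i * g i) ^ 2
        = ∑' i, ∑' j, 2 * (p i * g i * (p j * g j)) := by
          simp_rw [sq, ENNReal.tsum_mul_left, ENNReal.tsum_mul_right]
      _ ≤ ∑' i, ∑' j, (p i * (p j * g j ^ 2) + p i * g i ^ 2 * p j) :=
          ENNReal.tsum_le_tsum fun i => ENNReal.tsum_le_tsum fun j => hpair i j
      _ = 2 * ((∑' i, p i) * ∑' i, p i * g i ^ 2) := by
          simp_rw [ENNReal.tsum_add, ENNReal.tsum_mul_left, ENNReal.tsum_mul_right]
          ring
  exact (ENNReal.mul_le_mul_iff_right two_ne_zero ofNat_ne_top).1 hdouble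

theorem tsum_sq_tsum_mul_sub_le {G : Type*} [AddGroup G] (φ γ : G → ℝ≥0∞) :
    ∑' n, (∑' k, φ k * γ (n - k)) ^ 2 ≤ (∑' k, φ k) ^ 2 * ∑' k, γ k ^ 2 := by
  have hshift : ∀ k, ∑' n, γ (n - k) ^ 2 = ∑' n, γ n ^ 2 := fun k =>
    (Equiv.subRight k).tsum_eq fun m => γ m ^ 2
  calc ∑' n, (∑' k, φ k * γ (n - k)) ^ 2
      ≤ ∑' n, (∑' k, φ k) * ∑' k, φ k * γ (n - k) ^ 2 :=
        ENNReal.tsum_le_tsum fun n => sq_tsum_mul_le φ (fun k => γ (n - k))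
    _ = (∑' k, φ k) * ∑' k, φ k * ∑' n, γ (n - k) ^ 2 := by
        rw [ENNReal.tsum_mul_left, ENNReal.tsum_comm]
        simp_rw [ENNReal.tsum_mul_left]
    _ = (∑' k, φ k) ^ 2 * ∑' k, γ k ^ 2 := by
        simp_rw [hshift, ENNReal.tsum_mul_right]
        ring

end ENNReal

noncomputable def japaneseBracket (n : ℤ) : ℝ := max 1 |(n : ℝ)|

theorem one_le_japaneseBracket (n : ℤ) : 1 ≤ japaneseBracket n := le_max_left _ _

theorem japaneseBracket_pos (n : ℤ) : 0 < japaneseBracket n :=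
  one_pos.trans_le (one_le_japaneseBracket n)

theorem abs_le_japaneseBracket (n : ℤ) : |(n : ℝ)| ≤ japaneseBracket n := le_max_right _ _

@[simp] theorem japaneseBracket_zero : japaneseBracket 0 = 1 := by simp [japaneseBracket]

theorem japaneseBracket_of_ne_zero {n : ℤ} (hn : n ≠ 0) : japaneseBracket n = |(n : ℝ)| :=
  max_eq_right (by exact_mod_cast Int.one_le_abs hn)

theorem japaneseBracket_add_le (m n : ℤ) :
    japaneseBracket (m + n) ≤ japaneseBracket m + |(n : ℝ)| := by
  have hm := one_le_japaneseBracket m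
  refine max_le (by linarith [abs_nonneg (n : ℝ)]) ?_
  push_cast
  exact (abs_add_le _ _).trans (by linarith [abs_le_japaneseBracket m])

theorem summable_japaneseBracket_rpow_neg {b : ℝ} (hb : 1 < b) :
    Summable fun n : ℤ => japaneseBracket n ^ (-b) := by
  refine (Real.summable_abs_int_rpow hb).of_norm_bounded_eventually ?_
  filter_upwards [Filter.eventually_cofinite_ne 0] with n hn
  rw [japaneseBracket_of_ne_zero hn, Real.norm_of_nonneg (by positivity)]

theorem japaneseBracket_add_le_of_support {ε : ℝ} (hε : 0 < ε) {η ξ : ℤ}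
    (h : (η, ξ) = (0, 0) ∨
      (ε * japaneseBracket ξ < |(η : ℝ)| ∧ |(η : ℝ)| < japaneseBracket ξ / ε)) :
    japaneseBracket (η + ξ) ≤ (1 + ε⁻¹) * japaneseBracket η ∧
      japaneseBracket (η + ξ) ≤ (1 + ε⁻¹) * japaneseBracket ξ := by
  have hε' : 0 < ε⁻¹ := inv_pos.2 hε
  rcases h with h | ⟨hlow, hhigh⟩
  · obtain ⟨rfl, rfl⟩ := Prod.mk.inj h
    simp [hε'.le]
  have hξη : japaneseBracket ξ ≤ ε⁻¹ * japaneseBracket η := by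
    rw [inv_mul_eq_div, le_div_iff₀' hε]
    linarith [abs_le_japaneseBracket η]
  have hηξ : |(η : ℝ)| ≤ ε⁻¹ * japaneseBracket ξ := by
    rw [inv_mul_eq_div]; exact hhigh.le
  constructor
  · linarith [japaneseBracket_add_le η ξ, abs_le_japaneseBracket ξ]
  · linarith [add_comm η ξ ▸ japaneseBracket_add_le ξ η]

theorem Real.rpow_add_le_mul_rpow_mul_rpow {x a b c s t : ℝ} (hx : 0 < x) (ha : 0 ≤ a)
    (hb : 0 ≤ b) (hc : 0 < c) (hs : 0 ≤ s) (ht : 0 ≤ t) (hxa : x ≤ c * a) (hxb : x ≤ c * b) :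
    x ^ (s + t) ≤ c ^ (s + t) * (a ^ s * b ^ t) :=
  calc x ^ (s + t) = x ^ s * x ^ t := Real.rpow_add hx s t
    _ ≤ (c * a) ^ s * (c * b) ^ t := by gcongr
    _ = c ^ (s + t) * (a ^ s * b ^ t) := by
        rw [Real.mul_rpow hc.le ha, Real.mul_rpow hc.le hb, Real.rpow_add hc]; ring

theorem japaneseBracket_add_rpow_le_of_support {ε s₁ s₂ : ℝ} (hε : 0 < ε) (hs₁ : 0 ≤ s₁)
    (hs₂ : 0 ≤ s₂) {η ξ : ℤ}
    (h : (η, ξ) = (0, 0) ∨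
      (ε * japaneseBracket ξ < |(η : ℝ)| ∧ |(η : ℝ)| < japaneseBracket ξ / ε)) :
    japaneseBracket (η + ξ) ^ (s₁ + s₂) ≤
      (1 + ε⁻¹) ^ (s₁ + s₂) * (japaneseBracket η ^ s₁ * japaneseBracket ξ ^ s₂) :=
  have ⟨hη, hξ⟩ := japaneseBracket_add_le_of_support hε h
  Real.rpow_add_le_mul_rpow_mul_rpow (japaneseBracket_pos _) (japaneseBracket_pos _).le
    (japaneseBracket_pos _).le (by positivity) hs₁ hs₂ hη hξ

noncomputable def weightedCoeff (s : ℝ) (c : ℤ → ℂ) (n : ℤ) : ℝ≥0∞ :=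
  ENNReal.ofReal (japaneseBracket n ^ s) * ‖c n‖ₑ

theorem ofReal_rpow_mul_norm_sq_eq_weightedCoeff_sq (s : ℝ) (c : ℤ → ℂ) (n : ℤ) :
    ENNReal.ofReal (japaneseBracket n ^ (2 * s) * ‖c n‖ ^ 2) = weightedCoeff s c n ^ 2 := by
  have hn := japaneseBracket_pos n
  rw [weightedCoeff, mul_pow, ← ofReal_norm, ← ENNReal.ofReal_pow (norm_nonneg _),
    ← ENNReal.ofReal_pow (by positivity), ← ENNReal.ofReal_mul (by positivity), mul_comm 2 s,
    Real.rpow_mul hn.le, Real.rpow_two]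

theorem weightedCoeff_eq_mul (s : ℝ) (c : ℤ → ℂ) (n : ℤ) :
    weightedCoeff s c n =
      ENNReal.ofReal (japaneseBracket n ^ (-2 : ℝ)) * weightedCoeff (s + 2) c n := by
  have hn := japaneseBracket_pos n
  rw [weightedCoeff, weightedCoeff, ← mul_assoc, ← ENNReal.ofReal_mul (by positivity),
    ← Real.rpow_add hn]
  ring_nf

theorem weightedCoeff_sq_eq_mul (s : ℝ) (c : ℤ → ℂ) (n : ℤ) :
    weightedCoeff (s + 1) c n ^ 2 =
      ENNReal.ofReal (japaneseBracket n ^ (-2 : ℝ)) * weightedCoeff (s + 2) c n ^ 2 := by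
  have hn := japaneseBracket_pos n
  rw [weightedCoeff, weightedCoeff, mul_pow, mul_pow, ← mul_assoc,
    ← ENNReal.ofReal_pow (by positivity), ← ENNReal.ofReal_pow (by positivity),
    ← ENNReal.ofReal_mul (by positivity), ← Real.rpow_natCast, ← Real.rpow_natCast,
    ← Real.rpow_mul hn.le, ← Real.rpow_mul hn.le, ← Real.rpow_add hn]
  ring_nf

theorem sq_tsum_weightedCoeff_le (s : ℝ) (c : ℤ → ℂ) :
    (∑' n, weightedCoeff s c n) ^ 2 ≤
      ENNReal.ofReal (∑' n : ℤ, japaneseBracket n ^ (-2 : ℝ)) *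
        ∑' n, weightedCoeff (s + 1) c n ^ 2 := by
  -- Cauchy–Schwarz with the weights `⟨n⟩⁻²` applied to `⟨n⟩^(s+2) |c n|`.
  have hS : ∑' n : ℤ, ENNReal.ofReal (japaneseBracket n ^ (-2 : ℝ)) =
      ENNReal.ofReal (∑' n : ℤ, japaneseBracket n ^ (-2 : ℝ)) :=
    (ENNReal.ofReal_tsum_of_nonneg (fun n => Real.rpow_nonneg (japaneseBracket_pos n).le _)
      (summable_japaneseBracket_rpow_neg one_lt_two)).symm
  simpa only [← weightedCoeff_eq_mul, ← weightedCoeff_sq_eq_mul, hS] using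
    ENNReal.sq_tsum_mul_le (fun n => ENNReal.ofReal (japaneseBracket n ^ (-2 : ℝ)))
      (weightedCoeff (s + 2) c)

noncomputable def remainderCoeff (ω : ℤ × ℤ → ℝ) (a u : ℤ → ℂ) (n : ℤ) : ℂ :=
  ∑' η, (ω (η, n - η) : ℂ) * a η * u (n - η)

section Remainder

variable {ε s₁ s₂ : ℝ} {ω : ℤ × ℤ → ℝ} {a u : ℤ → ℂ}

theorem weightedCoeff_remainderCoeff_le (hε : 0 < ε) (hs₁ : 0 ≤ s₁) (hs₂ : 0 ≤ s₂)
    (hω : ∀ p, |ω p| ≤ 1)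
    (hsupp : ∀ η ξ : ℤ, ω (η, ξ) ≠ 0 → (η, ξ) = (0, 0) ∨
      (ε * japaneseBracket ξ < |(η : ℝ)| ∧ |(η : ℝ)| < japaneseBracket ξ / ε)) (n : ℤ) :
    weightedCoeff (s₁ + s₂) (remainderCoeff ω a u) n ≤
      ENNReal.ofReal ((1 + ε⁻¹) ^ (s₁ + s₂)) *
        ∑' η, weightedCoeff s₁ a η * weightedCoeff s₂ u (n - η) := by
  have hterm : ∀ η, ENNReal.ofReal (japaneseBracket n ^ (s₁ + s₂)) *
      ‖(ω (η, n - η) : ℂ) * a η * u (n - η)‖ₑ ≤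
        ENNReal.ofReal ((1 + ε⁻¹) ^ (s₁ + s₂)) *
          (weightedCoeff s₁ a η * weightedCoeff s₂ u (n - η)) := fun η => by
    by_cases hω0 : ω (η, n - η) = 0
    · simp [hω0]
    have hweight := japaneseBracket_add_rpow_le_of_support hε hs₁ hs₂ (hsupp η (n - η) hω0)
    rw [add_sub_cancel] at hweight
    have hωe : ‖(ω (η, n - η) : ℂ)‖ₑ ≤ 1 := by
      rw [← ofReal_norm, Complex.norm_real, Real.norm_eq_abs]
      exact ENNReal.ofReal_le_one.2 (hω _)
    have := japaneseBracket_pos η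
    have := japaneseBracket_pos (n - η)
    calc ENNReal.ofReal (japaneseBracket n ^ (s₁ + s₂)) *
          ‖(ω (η, n - η) : ℂ) * a η * u (n - η)‖ₑ
        ≤ ENNReal.ofReal ((1 + ε⁻¹) ^ (s₁ + s₂) *
            (japaneseBracket η ^ s₁ * japaneseBracket (n - η) ^ s₂)) *
              (1 * ‖a η‖ₑ * ‖u (n - η)‖ₑ) := by
          rw [enorm_mul, enorm_mul]
          gcongr
      _ = _ := by
          rw [weightedCoeff, weightedCoeff, ENNReal.ofReal_mul (by positivity),
            ENNReal.ofReal_mul (by positivity)]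
          ring
  calc weightedCoeff (s₁ + s₂) (remainderCoeff ω a u) n
      ≤ ENNReal.ofReal (japaneseBracket n ^ (s₁ + s₂)) *
          ∑' η, ‖(ω (η, n - η) : ℂ) * a η * u (n - η)‖ₑ := by
        rw [weightedCoeff, remainderCoeff]
        gcongr
        exact enorm_tsum_le_tsum_enorm
    _ ≤ _ := by
        rw [← ENNReal.tsum_mul_left, ← ENNReal.tsum_mul_left]
        exact ENNReal.tsum_le_tsum hterm

theorem tsum_weightedCoeff_remainderCoeff_sq_le (hε : 0 < ε) (hs₁ : 0 ≤ s₁) (hs₂ : 0 ≤ s₂)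
    (hω : ∀ p, |ω p| ≤ 1)
    (hsupp : ∀ η ξ : ℤ, ω (η, ξ) ≠ 0 → (η, ξ) = (0, 0) ∨
      (ε * japaneseBracket ξ < |(η : ℝ)| ∧ |(η : ℝ)| < japaneseBracket ξ / ε)) :
    ∑' n, weightedCoeff (s₁ + s₂) (remainderCoeff ω a u) n ^ 2 ≤
      ENNReal.ofReal ((1 + ε⁻¹) ^ (s₁ + s₂)) ^ 2 *
        ENNReal.ofReal (∑' n : ℤ, japaneseBracket n ^ (-2 : ℝ)) *
          ((∑' n, weightedCoeff (s₁ + 1) a n ^ 2) * ∑' n, weightedCoeff s₂ u n ^ 2) :=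
  calc ∑' n, weightedCoeff (s₁ + s₂) (remainderCoeff ω a u) n ^ 2
      ≤ ∑' n, (ENNReal.ofReal ((1 + ε⁻¹) ^ (s₁ + s₂)) *
          ∑' η, weightedCoeff s₁ a η * weightedCoeff s₂ u (n - η)) ^ 2 :=
        ENNReal.tsum_le_tsum fun n => by
          gcongr; exact weightedCoeff_remainderCoeff_le hε hs₁ hs₂ hω hsupp n
    _ = ENNReal.ofReal ((1 + ε⁻¹) ^ (s₁ + s₂)) ^ 2 *
          ∑' n, (∑' η, weightedCoeff s₁ a η * weightedCoeff s₂ u (n - η)) ^ 2 := by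
        simp_rw [mul_pow, ENNReal.tsum_mul_left]
    _ ≤ ENNReal.ofReal ((1 + ε⁻¹) ^ (s₁ + s₂)) ^ 2 *
          ((∑' η, weightedCoeff s₁ a η) ^ 2 * ∑' n, weightedCoeff s₂ u n ^ 2) := by
        gcongr; exact ENNReal.tsum_sq_tsum_mul_sub_le _ _
    _ ≤ ENNReal.ofReal ((1 + ε⁻¹) ^ (s₁ + s₂)) ^ 2 *
          ((ENNReal.ofReal (∑' n : ℤ, japaneseBracket n ^ (-2 : ℝ)) *
            ∑' n, weightedCoeff (s₁ + 1) a n ^ 2) * ∑' n, weightedCoeff s₂ u n ^ 2) := by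
        gcongr; exact sq_tsum_weightedCoeff_le s₁ a
    _ = _ := by ring

end Remainder

theorem summable_and_tsum_le_of_tsum_ofReal_le {ι : Type*} {f : ι → ℝ} (hf : ∀ i, 0 ≤ f i)
    {B : ℝ} (hB : 0 ≤ B) (h : ∑' i, ENNReal.ofReal (f i) ≤ ENNReal.ofReal B) :
    Summable f ∧ ∑' i, f i ≤ B := by
  have hsum : Summable f := by
    simpa only [ENNReal.toReal_ofReal (hf _)] using
      ENNReal.summable_toReal (h.trans_lt ENNReal.ofReal_lt_top).ne
  refine ⟨hsum, ?_⟩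
  rwa [← ENNReal.ofReal_tsum_of_nonneg hf hsum, ENNReal.ofReal_le_ofReal_iff hB] at h

theorem tsum_weightedCoeff_sq_eq_ofReal {s : ℝ} {c : ℤ → ℂ}
    (hc : Summable fun n : ℤ => japaneseBracket n ^ (2 * s) * ‖c n‖ ^ 2) :
    ∑' n, weightedCoeff s c n ^ 2 =
      ENNReal.ofReal (∑' n : ℤ, japaneseBracket n ^ (2 * s) * ‖c n‖ ^ 2) := by
  simp_rw [← ofReal_rpow_mul_norm_sq_eq_weightedCoeff_sq]
  exact (ENNReal.ofReal_tsum_of_nonneg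
    (fun n => mul_nonneg (Real.rpow_nonneg (japaneseBracket_pos n).le _) (sq_nonneg _)) hc).symm

theorem paraproduct_remainder_estimate_general
    (s₁ s₂ ε' : ℝ) (hs₁ : 0 ≤ s₁) (hs₂ : 0 ≤ s₂) (hε'0 : 0 < ε') :
    ∃ C : ℝ, 0 < C ∧
      ∀ (ahat uhat : ℤ → ℂ) (ω : ℤ × ℤ → ℝ),
        (∀ p : ℤ × ℤ, |ω p| ≤ 1) →
        (∀ η ξ : ℤ, ω (η, ξ) ≠ 0 → (η, ξ) = (0, 0) ∨
          (ε' * max 1 |(ξ : ℝ)| < |(η : ℝ)| ∧ |(η : ℝ)| < max 1 |(ξ : ℝ)| / ε')) →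
        Summable (fun η : ℤ => (max 1 |(η : ℝ)|) ^ (2 * (s₁ + 1)) * ‖ahat η‖ ^ 2) →
        Summable (fun ξ : ℤ => (max 1 |(ξ : ℝ)|) ^ (2 * s₂) * ‖uhat ξ‖ ^ 2) →
        Summable (fun n : ℤ => (max 1 |(n : ℝ)|) ^ (2 * (s₁ + s₂)) *
            ‖∑' η : ℤ, (ω (η, n - η) : ℂ) * ahat η * uhat (n - η)‖ ^ 2) ∧
          Real.sqrt (∑' n : ℤ, (max 1 |(n : ℝ)|) ^ (2 * (s₁ + s₂)) *
              ‖∑' η : ℤ, (ω (η, n - η) : ℂ) * ahat η * uhat (n - η)‖ ^ 2) ≤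
            C * Real.sqrt (∑' η : ℤ, (max 1 |(η : ℝ)|) ^ (2 * (s₁ + 1)) * ‖ahat η‖ ^ 2) *
              Real.sqrt (∑' ξ : ℤ, (max 1 |(ξ : ℝ)|) ^ (2 * s₂) * ‖uhat ξ‖ ^ 2) := by
  set S := ∑' n : ℤ, japaneseBracket n ^ (-2 : ℝ)
  set K := (1 + ε'⁻¹) ^ (s₁ + s₂)
  have hS : 0 < S := (summable_japaneseBracket_rpow_neg one_lt_two).tsum_pos
    (fun n => Real.rpow_nonneg (japaneseBracket_pos n).le _) 0 (by simp)
  refine ⟨K * √S, by positivity, fun a u ω hω hsupp ha hu => ?_⟩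
  set NA := ∑' η : ℤ, japaneseBracket η ^ (2 * (s₁ + 1)) * ‖a η‖ ^ 2
  set NU := ∑' ξ : ℤ, japaneseBracket ξ ^ (2 * s₂) * ‖u ξ‖ ^ 2
  have hNA : 0 ≤ NA := tsum_nonneg fun η =>
    mul_nonneg (Real.rpow_nonneg (japaneseBracket_pos η).le _) (sq_nonneg _)
  have hNU : 0 ≤ NU := tsum_nonneg fun ξ =>
    mul_nonneg (Real.rpow_nonneg (japaneseBracket_pos ξ).le _) (sq_nonneg _)
  obtain ⟨hsum, hle⟩ := summable_and_tsum_le_of_tsum_ofReal_le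
    (f := fun n => japaneseBracket n ^ (2 * (s₁ + s₂)) * ‖remainderCoeff ω a u n‖ ^ 2)
    (fun n => mul_nonneg (Real.rpow_nonneg (japaneseBracket_pos n).le _) (sq_nonneg _))
    (B := (K * √S) ^ 2 * (NA * NU)) (by positivity) <| by
      simp_rw [ofReal_rpow_mul_norm_sq_eq_weightedCoeff_sq]
      calc _ ≤ _ := tsum_weightedCoeff_remainderCoeff_sq_le hε'0 hs₁ hs₂ hω hsupp
        _ = _ := by
          rw [tsum_weightedCoeff_sq_eq_ofReal ha, tsum_weightedCoeff_sq_eq_ofReal hu,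
            ← ENNReal.ofReal_pow (by positivity), ← ENNReal.ofReal_mul (by positivity),
            ← ENNReal.ofReal_mul hNA, ← ENNReal.ofReal_mul (by positivity), mul_pow,
            Real.sq_sqrt hS.le]
  refine ⟨hsum, ?_⟩
  calc √(∑' n, japaneseBracket n ^ (2 * (s₁ + s₂)) * ‖remainderCoeff ω a u n‖ ^ 2)
      ≤ √((K * √S) ^ 2 * (NA * NU)) := Real.sqrt_le_sqrt hle
    _ = K * √S * √NA * √NU := by
        rw [Real.sqrt_mul (sq_nonneg _), Real.sqrt_sq (by positivity), Real.sqrt_mul hNA]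
        ring

/-- Smoothing property of the para-product remainder (Fourier side): if
`|ω| ≤ 1` and `ω` is supported in `{ε'⟨ξ⟩ < |η| < ⟨ξ⟩/ε'} ∪ {(0,0)}`, then the
remainder with Fourier coefficients `R̂(n) = ∑_{η+ξ=n} ω(η,ξ) â(η) û(ξ)` belongs
to `H^{s₁+s₂}` and `‖R(a,u)‖_{s₁+s₂} ≤ C(s₁,s₂,ε') ‖a‖_{s₁+1} ‖u‖_{s₂}`. -/
theorem paraproduct_remainder_estimate
    (s₁ s₂ ε' : ℝ) (hs₁ : 0 ≤ s₁) (hs₂ : 0 ≤ s₂) (hε'0 : 0 < ε') (hε'1 : ε' < 1) :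
    ∃ C : ℝ, 0 < C ∧
      ∀ (ahat uhat : ℤ → ℂ) (ω : ℤ × ℤ → ℝ),
        (∀ p : ℤ × ℤ, |ω p| ≤ 1) →
        (∀ η ξ : ℤ, ω (η, ξ) ≠ 0 → (η, ξ) = (0, 0) ∨
          (ε' * max 1 |(ξ : ℝ)| < |(η : ℝ)| ∧ |(η : ℝ)| < max 1 |(ξ : ℝ)| / ε')) →
        Summable (fun η : ℤ => (max 1 |(η : ℝ)|) ^ (2 * (s₁ + 1)) * ‖ahat η‖ ^ 2) →
        Summable (fun ξ : ℤ => (max 1 |(ξ : ℝ)|) ^ (2 * s₂) * ‖uhat ξ‖ ^ 2) →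
        Summable (fun n : ℤ => (max 1 |(n : ℝ)|) ^ (2 * (s₁ + s₂)) *
            ‖∑' η : ℤ, (ω (η, n - η) : ℂ) * ahat η * uhat (n - η)‖ ^ 2) ∧
          Real.sqrt (∑' n : ℤ, (max 1 |(n : ℝ)|) ^ (2 * (s₁ + s₂)) *
              ‖∑' η : ℤ, (ω (η, n - η) : ℂ) * ahat η * uhat (n - η)‖ ^ 2) ≤
            C * Real.sqrt (∑' η : ℤ, (max 1 |(η : ℝ)|) ^ (2 * (s₁ + 1)) * ‖ahat η‖ ^ 2) *
              Real.sqrt (∑' ξ : ℤ, (max 1 |(ξ : ℝ)|) ^ (2 * s₂) * ‖uhat ξ‖ ^ 2) :=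
  paraproduct_remainder_estimate_general s₁ s₂ ε' hs₁ hs₂ hε'0
end
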